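/- arXiv:2112.10509 — 3 statements merged into one kernel-verified Lean document; each statement's English description precedes it below -/
import Mathlib

section
/- Monotonicity transfer lemma: suppose $C_1,\dots,C_k : S \to [0,1]$ are functions on a set $S$ such that for each $j$ and each finite ensemble $\{(p_i, \sigma_i)\}$ arising from a state $\rho$ one has $\sum_i p_i C_j(\sigma_i) \le C_j(\rho)$ (with $p_i \ge 0$, $\sum_i p_i = 1$). Then the geometric mean $G(\rho) = (\prod_{j=1}^k C_j(\rho))^{1/k}$ satisfies $\sum_i p_i G(\sigma_i) \le G(\rho)$ for the same ensembles. -/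
open Finset

/-- Monotonicity transfer: if each `C j` does not increase on average for a given
ensemble, then neither does the geometric mean of the `C j`. -/
theorem geometric_mean_monotonicity_transfer {S : Type*} (k : ℕ) (hk : 0 < k)
    (C : Fin k → S → ℝ) (hC : ∀ j s, C j s ∈ Set.Icc (0:ℝ) 1)
    {ι : Type*} [Fintype ι] (p : ι → ℝ) (σ : ι → S) (ρ : S)
    (hp : ∀ i, 0 ≤ p i) (hps : ∑ i, p i = 1)
    (hmono : ∀ j, ∑ i, p i * C j (σ i) ≤ C j ρ) :
    ∑ i, p i * (∏ j, C j (σ i)) ^ ((1:ℝ)/k) ≤ (∏ j, C j ρ) ^ ((1:ℝ)/k) := by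
  have hk' : (k:ℝ) ≠ 0 := Nat.cast_ne_zero.mpr hk.ne'
  have hkpos : (0:ℝ) < k := Nat.cast_pos.mpr hk
  by_cases hy : ∃ j, C j ρ = 0
  · obtain ⟨j0, hj0⟩ := hy
    have hrhs : (∏ j, C j ρ) ^ ((1:ℝ)/k) = 0 := by
      rw [Finset.prod_eq_zero (mem_univ j0) hj0, Real.zero_rpow (by positivity)]
    rw [hrhs]
    have hsum0 : ∑ i, p i * C j0 (σ i) = 0 :=
      le_antisymm (hj0 ▸ hmono j0)
        (Finset.sum_nonneg fun i _ => mul_nonneg (hp i) (hC j0 _).1)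
    have hterm : ∀ i ∈ univ, p i * C j0 (σ i) = 0 :=
      (Finset.sum_eq_zero_iff_of_nonneg fun i _ =>
        mul_nonneg (hp i) (hC j0 _).1).mp hsum0
    refine le_of_eq (Finset.sum_eq_zero fun i _ => ?_)
    rcases mul_eq_zero.mp (hterm i (mem_univ i)) with h | h
    · rw [h, zero_mul]
    · rw [Finset.prod_eq_zero (mem_univ j0) h, Real.zero_rpow (by positivity), mul_zero]
  · push_neg at hy
    have hy' : ∀ j, 0 < C j ρ := fun j => lt_of_le_of_ne (hC j ρ).1 (Ne.symm (hy j))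
    have hPy : (0:ℝ) < ∏ j, C j ρ := Finset.prod_pos fun j _ => hy' j
    have key : ∀ i, (∏ j, C j (σ i)) ^ ((1:ℝ)/k) ≤
        (∏ j, C j ρ) ^ ((1:ℝ)/k) * ∑ j, (1/(k:ℝ)) * (C j (σ i) / C j ρ) := by
      intro i
      have hzn : ∀ j ∈ univ, (0:ℝ) ≤ C j (σ i) / C j ρ :=
        fun j _ => div_nonneg (hC j _).1 (hy' j).le
      have hAMGM : (∏ j, (C j (σ i) / C j ρ) ^ ((1:ℝ)/k)) ≤
          ∑ j, (1/(k:ℝ)) * (C j (σ i) / C j ρ) := by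
        refine Real.geom_mean_le_arith_mean_weighted univ (fun _ => (1:ℝ)/k)
          (fun j => C j (σ i) / C j ρ) (fun _ _ => by positivity) ?_ hzn
        simp [Finset.sum_const, card_univ]
        field_simp
      have heq : (∏ j, C j (σ i)) ^ ((1:ℝ)/k) =
          (∏ j, C j ρ) ^ ((1:ℝ)/k) * ∏ j, (C j (σ i) / C j ρ) ^ ((1:ℝ)/k) := by
        rw [Real.finset_prod_rpow _ _ hzn, ← Real.mul_rpow hPy.le
          (Finset.prod_nonneg hzn)]
        congr 1
        rw [Finset.prod_div_distrib, mul_div_cancel₀ _ hPy.ne']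
      rw [heq]
      exact mul_le_mul_of_nonneg_left hAMGM (Real.rpow_nonneg hPy.le _)
    calc ∑ i, p i * (∏ j, C j (σ i)) ^ ((1:ℝ)/k)
        ≤ ∑ i, p i * ((∏ j, C j ρ) ^ ((1:ℝ)/k) * ∑ j, (1/(k:ℝ)) * (C j (σ i) / C j ρ)) := by
          refine Finset.sum_le_sum fun i _ => mul_le_mul_of_nonneg_left (key i) (hp i)
      _ = (∏ j, C j ρ) ^ ((1:ℝ)/k) *
            ∑ j, (1/(k:ℝ)) * ((∑ i, p i * C j (σ i)) / C j ρ) := by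
          rw [Finset.mul_sum]
          have h1 : ∀ i, p i * ((∏ j, C j ρ) ^ ((1:ℝ)/k) *
              ∑ j, (1/(k:ℝ)) * (C j (σ i) / C j ρ)) =
              (∏ j, C j ρ) ^ ((1:ℝ)/k) * ∑ j, p i * ((1/(k:ℝ)) * (C j (σ i) / C j ρ)) := by
            intro i; rw [Finset.mul_sum, Finset.mul_sum, Finset.mul_sum]
            exact Finset.sum_congr rfl fun j _ => by ring
          simp_rw [h1]
          rw [← Finset.mul_sum, Finset.sum_comm, Finset.mul_sum]
          refine Finset.sum_congr rfl fun j _ => ?_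
          congr 1
          rw [Finset.sum_div, Finset.mul_sum]
          exact Finset.sum_congr rfl fun i _ => by ring
      _ ≤ (∏ j, C j ρ) ^ ((1:ℝ)/k) * ∑ j : Fin k, (1/(k:ℝ)) * 1 := by
          refine mul_le_mul_of_nonneg_left (Finset.sum_le_sum fun j _ => ?_)
            (Real.rpow_nonneg hPy.le _)
          refine mul_le_mul_of_nonneg_left ?_ (by positivity)
          exact div_le_one_of_le₀ (hmono j) (hy' j).le
      _ = (∏ j, C j ρ) ^ ((1:ℝ)/k) := by
          simp [Finset.sum_const, card_univ]
          field_simp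
end

section
/- For the $n$-qubit W state, the regularized $m$-to-$(n-m)$ bipartite concurrence equals $\sqrt{\frac{2^{m+1} m (n-m)}{(2^m - 1) n^2}}$ for $1 \le m \le n/2$. -/
section Aux
open Finset

lemma fin2_eq_zero (v : Fin 2) (h : v ≠ 1) : v = 0 := by omega

lemma card_weight_zero (X : Type*) [Fintype X] [DecidableEq X] :
    (univ.filter fun f : X → Fin 2 => (univ.filter fun i => f i = 1).card = 0).card = 1 := by
  rw [Finset.card_eq_one]
  refine ⟨fun _ => 0, ?_⟩
  ext f
  simp only [mem_filter, mem_univ, true_and, Finset.card_eq_zero, Finset.filter_eq_empty_iff,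
    mem_singleton]
  constructor
  · intro h; funext i; exact fin2_eq_zero _ (by simpa using @h i trivial)
  · intro h; subst h; intro i _; exact one_ne_zero ∘ Eq.symm

lemma card_weight_one (X : Type*) [Fintype X] [DecidableEq X] :
    (univ.filter fun f : X → Fin 2 => (univ.filter fun i => f i = 1).card = 1).card
      = Fintype.card X := by
  have himg : (univ.filter fun f : X → Fin 2 => (univ.filter fun i => f i = 1).card = 1)
      = univ.image (fun a : X => (fun i => if i = a then (1 : Fin 2) else 0)) := by
    ext f
    simp only [mem_filter, mem_univ, true_and, mem_image]
    constructor
    · intro hf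
      obtain ⟨a, ha⟩ := Finset.card_eq_one.mp hf
      refine ⟨a, ?_⟩
      funext i
      by_cases hia : i = a
      · subst hia
        have : i ∈ univ.filter fun i => f i = 1 := by rw [ha]; exact mem_singleton_self i
        simpa using (mem_filter.mp this).2.symm
      · have : i ∉ univ.filter fun i => f i = 1 := by rw [ha]; simpa using hia
        simp only [mem_filter, mem_univ, true_and] at this
        simp [hia, (fin2_eq_zero _ this).symm]
    · rintro ⟨a, rfl⟩
      have : (univ.filter fun i => (if i = a then (1:Fin 2) else 0) = 1) = {a} := by
        ext i; by_cases hia : i = a <;> simp [hia]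
      rw [this, Finset.card_singleton]
  rw [himg, Finset.card_image_of_injective _ ?_, Finset.card_univ]
  intro a b hab
  have := congrFun hab a
  by_contra hne
  simp [hne] at this

lemma weight_glue {n : ℕ} (S : Finset (Fin n)) (a : {i // i ∈ S} → Fin 2)
    (h : {i // i ∉ S} → Fin 2) :
    (univ.filter fun i => (if hi : i ∈ S then a ⟨i, hi⟩ else h ⟨i, hi⟩) = 1).card
      = (univ.filter fun j => a j = 1).card + (univ.filter fun j => h j = 1).card := by
  classical
  have hsplit : (univ.filter fun i => (if hi : i ∈ S then a ⟨i, hi⟩ else h ⟨i, hi⟩) = 1)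
      = ((univ.filter fun j : {i // i ∈ S} => a j = 1).image Subtype.val)
        ∪ ((univ.filter fun j : {i // i ∉ S} => h j = 1).image Subtype.val) := by
    ext i
    simp only [mem_filter, mem_union, mem_image, mem_univ, true_and]
    by_cases hi : i ∈ S
    · simp only [dif_pos hi]
      constructor
      · intro hv; exact Or.inl ⟨⟨i, hi⟩, hv, rfl⟩
      · rintro (⟨j, hj, rfl⟩ | ⟨j, hj, rfl⟩)
        · exact hj
        · exact absurd hi j.2
    · simp only [dif_neg hi]
      constructor
      · intro hv; exact Or.inr ⟨⟨i, hi⟩, hv, rfl⟩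
      · rintro (⟨j, hj, rfl⟩ | ⟨j, hj, rfl⟩)
        · exact absurd j.2 hi
        · exact hj
  rw [hsplit, Finset.card_union_of_disjoint, Finset.card_image_of_injective _ Subtype.val_injective,
    Finset.card_image_of_injective _ Subtype.val_injective]
  rw [Finset.disjoint_left]
  rintro x hx hx'
  simp only [mem_image, mem_filter, mem_univ, true_and] at hx hx'
  obtain ⟨j, _, rfl⟩ := hx
  obtain ⟨j', _, hjj'⟩ := hx'
  exact j'.2 (hjj' ▸ j.2)

lemma sum4 {α β : Type*} [Fintype α] [Fintype β] (f g : α → ℝ) (p q : β → ℝ) :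
    ∑ a : α, ∑ b : α, ∑ h : β, ∑ h' : β, f a * g b * (p h * q h')
      = (∑ a, f a) * (∑ b, g b) * ((∑ h, p h) * (∑ h', q h')) := by
  simp only [← Finset.sum_mul, ← Finset.mul_sum]

lemma term_split (r : ℝ) (wa wb v v' : ℕ) :
    (if wa + v = 1 then r else 0) * (if wb + v = 1 then r else 0) *
      ((if wb + v' = 1 then r else 0) * (if wa + v' = 1 then r else 0))
    = r ^ 4 * ((if wa = 0 then (1:ℝ) else 0) * (if wb = 0 then (1:ℝ) else 0) *
          ((if v = 1 then (1:ℝ) else 0) * (if v' = 1 then (1:ℝ) else 0))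
        + (if wa = 1 then (1:ℝ) else 0) * (if wb = 1 then (1:ℝ) else 0) *
          ((if v = 0 then (1:ℝ) else 0) * (if v' = 0 then (1:ℝ) else 0))) := by
  rw [ite_zero_mul_ite_zero, ite_zero_mul_ite_zero, ite_zero_mul_ite_zero,
    ite_zero_mul_ite_zero, ite_zero_mul_ite_zero, ite_zero_mul_ite_zero]
  split_ifs
  all_goals try ring
  all_goals exfalso
  all_goals omega

end Aux



/-- The `n`-qubit W state as an amplitude function on `(Fin n → Fin 2)`:
the equal superposition of all computational basis states of Hamming weight 1. -/
noncomputable def wState (n : ℕ) : (Fin n → Fin 2) → ℂ := fun f =>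
  if (Finset.univ.filter fun i => f i = 1).card = 1 then ((Real.sqrt n)⁻¹ : ℝ) else 0

/-- Reduced density matrix of a pure state on `n` qubits, obtained by tracing
out the qubits outside the subset `S`. -/
noncomputable def reducedState {n : ℕ} (ψ : (Fin n → Fin 2) → ℂ) (S : Finset (Fin n)) :
    Matrix ({i // i ∈ S} → Fin 2) ({i // i ∈ S} → Fin 2) ℂ :=
  fun a a' => ∑ h : {i // i ∉ S} → Fin 2,
    ψ (fun i => if hi : i ∈ S then a ⟨i, hi⟩ else h ⟨i, hi⟩) *
      star (ψ (fun i => if hi : i ∈ S then a' ⟨i, hi⟩ else h ⟨i, hi⟩))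

open Finset in
/-- The regularized `m`-to-`(n-m)` bipartite concurrence of the `n`-qubit W state
equals `√(2^(m+1) m (n-m) / ((2^m - 1) n²))` for `1 ≤ m ≤ n/2`. -/
theorem wState_concurrence (n m : ℕ) (hm : 1 ≤ m) (hmn : 2 * m ≤ n)
    (S : Finset (Fin n)) (hS : S.card = m) :
    Real.sqrt (((2:ℝ)^m / ((2:ℝ)^m - 1)) *
        (1 - (Matrix.trace (reducedState (wState n) S * reducedState (wState n) S)).re))
      = Real.sqrt ((2:ℝ)^(m+1) * m * ((n:ℝ) - m) / (((2:ℝ)^m - 1) * (n:ℝ)^2)) := by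
  classical
  set r : ℝ := (Real.sqrt n)⁻¹ with hr
  set W : ({i // i ∈ S} → Fin 2) → ℕ := fun a => (univ.filter fun j => a j = 1).card with hW
  set V : ({i // i ∉ S} → Fin 2) → ℕ := fun h => (univ.filter fun j => h j = 1).card with hV
  have hψ : ∀ (a : {i // i ∈ S} → Fin 2) (h : {i // i ∉ S} → Fin 2),
      wState n (fun i => if hi : i ∈ S then a ⟨i, hi⟩ else h ⟨i, hi⟩)
        = ((if W a + V h = 1 then r else 0 : ℝ) : ℂ) := by
    intro a h
    rw [wState, weight_glue]
    split_ifs <;> simp [hr]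
  -- the reduced density matrix entries, as real numbers
  set t : ({i // i ∈ S} → Fin 2) → ({i // i ∈ S} → Fin 2) → ℝ := fun a b =>
    ∑ h : {i // i ∉ S} → Fin 2,
      (if W a + V h = 1 then r else 0) * (if W b + V h = 1 then r else 0) with ht
  have hred : ∀ a b, reducedState (wState n) S a b = ((t a b : ℝ) : ℂ) := by
    intro a b
    rw [reducedState, ht]
    push_cast
    refine Finset.sum_congr rfl fun h _ => ?_
    rw [hψ, hψ, Complex.star_def, Complex.conj_ofReal, ← Complex.ofReal_mul]
  -- trace of ρ² as a real number
  have htr : (Matrix.trace (reducedState (wState n) S * reducedState (wState n) S)).re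
      = ∑ a, ∑ b, t a b * t b a := by
    rw [Matrix.trace]
    simp only [Matrix.diag_apply, Matrix.mul_apply, hred]
    push_cast
    simp [Complex.re_sum]
  have hcardS : Fintype.card {i // i ∈ S} = m := by
    rw [Fintype.card_of_subtype S (fun _ => Iff.rfl), hS]
  have hmn' : m ≤ n := le_trans (by omega) hmn
  have hcardSc : Fintype.card {i // i ∉ S} = n - m := by
    rw [Fintype.card_of_subtype (univ \ S) (by simp), Finset.card_sdiff_of_subset (Finset.subset_univ S),
      Finset.card_univ, Fintype.card_fin, hS]
  have hW0 : ∑ a : {i // i ∈ S} → Fin 2, (if W a = 0 then (1:ℝ) else 0) = 1 := by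
    rw [Finset.sum_boole]
    rw [hW]
    norm_cast
    exact card_weight_zero _
  have hW1 : ∑ a : {i // i ∈ S} → Fin 2, (if W a = 1 then (1:ℝ) else 0) = m := by
    rw [Finset.sum_boole, hW]
    norm_cast
    rw [card_weight_one, hcardS]
  have hV0 : ∑ h : {i // i ∉ S} → Fin 2, (if V h = 0 then (1:ℝ) else 0) = 1 := by
    rw [Finset.sum_boole, hV]
    norm_cast
    exact card_weight_zero _
  have hV1 : ∑ h : {i // i ∉ S} → Fin 2, (if V h = 1 then (1:ℝ) else 0) = ((n - m : ℕ) : ℝ) := by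
    rw [Finset.sum_boole, hV]
    norm_cast
    rw [card_weight_one, hcardSc]
  have hsum : ∑ a, ∑ b, t a b * t b a
      = r ^ 4 * (((n - m : ℕ) : ℝ) * ((n - m : ℕ) : ℝ) + (m : ℝ) * (m : ℝ)) := by
    simp only [ht, Finset.sum_mul_sum, term_split]
    simp only [← Finset.mul_sum]
    simp only [Finset.sum_add_distrib]
    rw [sum4, sum4, hW0, hW1, hV0, hV1]
    ring
  have hn0 : (0:ℝ) < n := by
    have : 2 ≤ n := le_trans (by omega) hmn
    positivity
  have hr4 : r ^ 4 = ((n:ℝ) ^ 2)⁻¹ := by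
    have h2 : Real.sqrt (n:ℝ) ^ 2 = (n:ℝ) := Real.sq_sqrt hn0.le
    rw [hr, show ((Real.sqrt (n:ℝ))⁻¹)^4 = ((Real.sqrt (n:ℝ))^2 * (Real.sqrt (n:ℝ))^2)⁻¹ from by
      ring, h2]
    ring
  rw [htr, hsum, hr4]
  congr 1
  have h2m : (2:ℝ)^m - 1 ≠ 0 := by
    have : (2:ℝ)^m ≥ 2^1 := pow_le_pow_right₀ (by norm_num) hm
    norm_num at this ⊢
    nlinarith
  have hnm : ((n - m : ℕ) : ℝ) = (n : ℝ) - m := by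
    push_cast [Nat.cast_sub hmn']
    ring
  rw [hnm, pow_succ]
  field_simp
  ring
end

section
/- For $n \ge 3$ qubits, the geometric mean of bipartite concurrences (GBC) of the W state is strictly smaller than that of the GHZ state: $\mathcal{G}(|W_n\rangle) < \mathcal{G}(|\mathrm{GHZ}_n\rangle)$. -/
/-- Multiplicity of the bipartitions of `n` parties whose smaller side has `m`
parties: `n.choose m` for `m < n/2`, and half of that when `n = 2m`. -/
noncomputable def kExp (n m : ℕ) : ℝ :=
  if 2 * m = n then (n.choose m : ℝ) / 2 else (n.choose m : ℝ)

/-- Total number of bipartitions of `n` parties. -/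
noncomputable def cAlpha (n : ℕ) : ℝ := ∑ m ∈ Finset.Icc 1 (n / 2), kExp n m

/-- Closed form for the GHZ-state bipartite concurrence across a bipartition
whose smaller side has `m` qubits. -/
noncomputable def ghzConc (m : ℕ) : ℝ := Real.sqrt ((2:ℝ)^m / (2 * ((2:ℝ)^m - 1)))

/-- Closed form for the W-state bipartite concurrence across a bipartition
whose smaller side has `m` qubits. -/
noncomputable def wConc (n m : ℕ) : ℝ :=
  Real.sqrt ((2:ℝ)^(m+1) * m * ((n:ℝ) - m) / (((2:ℝ)^m - 1) * (n:ℝ)^2))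

/-- Product of all bipartite concurrences of the `n`-qubit GHZ state. -/
noncomputable def ghzProd (n : ℕ) : ℝ :=
  ∏ m ∈ Finset.Icc 1 (n / 2), (ghzConc m) ^ (kExp n m)

/-- Product of all bipartite concurrences of the `n`-qubit W state. -/
noncomputable def wProd (n : ℕ) : ℝ :=
  ∏ m ∈ Finset.Icc 1 (n / 2), (wConc n m) ^ (kExp n m)

/-- The GBC of the `n`-qubit GHZ state (closed form). -/
noncomputable def ghzGBC (n : ℕ) : ℝ := (ghzProd n) ^ (1 / cAlpha n)

/-- The GBC of the `n`-qubit W state (closed form). -/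
noncomputable def wGBC (n : ℕ) : ℝ := (wProd n) ^ (1 / cAlpha n)

/-!
Across a cut with smaller side `m`, the W concurrence is the GHZ concurrence times
`√(4m(n-m)/n²)`, a factor that is at most `1` by AM-GM and strictly below `1` unless
`n = 2m`. So every factor of the W product is at most the corresponding GHZ factor,
and the one for `m = 1` is strictly smaller when `n ≥ 3`; taking the `1 / cAlpha n`-th
power preserves the strict inequality.
-/

lemma four_mul_mul_sub_div_sq_le_one (x y : ℝ) : 4 * x * (y - x) / y ^ 2 ≤ 1 := by
  rcases eq_or_ne y 0 with rfl | hy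
  · simp
  · rw [div_le_one (by positivity)]
    nlinarith [sq_nonneg (y - 2 * x)]

lemma four_mul_mul_sub_div_sq_lt_one {x y : ℝ} (hxy : 2 * x ≠ y) :
    4 * x * (y - x) / y ^ 2 < 1 := by
  rcases eq_or_ne y 0 with rfl | hy
  · simp
  · have : 0 < (y - 2 * x) ^ 2 := by
      have := sub_ne_zero.2 hxy.symm
      positivity
    rw [div_lt_one (by positivity)]
    nlinarith

lemma ghzConc_pos {m : ℕ} (hm : 1 ≤ m) : 0 < ghzConc m := by
  have : (1:ℝ) < 2 ^ m := one_lt_pow₀ one_lt_two (by omega)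
  exact Real.sqrt_pos.2 (div_pos (by positivity) (by linarith))

lemma wConc_eq_ghzConc_mul (n m : ℕ) :
    wConc n m = ghzConc m * Real.sqrt (4 * m * (n - m) / (n:ℝ) ^ 2) := by
  have : (1:ℝ) ≤ 2 ^ m := one_le_pow₀ one_le_two
  rw [ghzConc, wConc, ← Real.sqrt_mul (div_nonneg (by positivity) (by linarith))]
  congr 1
  field_simp
  ring

lemma wConc_le_ghzConc (n m : ℕ) : wConc n m ≤ ghzConc m := by
  rw [wConc_eq_ghzConc_mul]
  refine mul_le_of_le_one_right (Real.sqrt_nonneg _) ?_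
  exact Real.sqrt_le_one.2 (four_mul_mul_sub_div_sq_le_one _ _)

lemma wConc_lt_ghzConc {n m : ℕ} (hm : 1 ≤ m) (hmn : 2 * m ≠ n) : wConc n m < ghzConc m := by
  rw [wConc_eq_ghzConc_mul]
  refine mul_lt_of_lt_one_right (ghzConc_pos hm) ?_
  rw [Real.sqrt_lt' one_pos, one_pow]
  exact four_mul_mul_sub_div_sq_lt_one (by exact_mod_cast hmn)

lemma wConc_pos {n m : ℕ} (hm : 1 ≤ m) (hmn : m < n) : 0 < wConc n m := by
  rw [wConc_eq_ghzConc_mul]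
  have hm' : (0:ℝ) < m := by exact_mod_cast hm
  have hmn' : (m:ℝ) < n := by exact_mod_cast hmn
  have hn' : (0:ℝ) < n := hm'.trans hmn'
  exact mul_pos (ghzConc_pos hm) (Real.sqrt_pos.2 (div_pos
    (mul_pos (by positivity) (sub_pos.2 hmn')) (by positivity)))

lemma kExp_nonneg (n m : ℕ) : 0 ≤ kExp n m := by
  unfold kExp; split <;> positivity

lemma kExp_pos {n m : ℕ} (hmn : m ≤ n) : 0 < kExp n m := by
  have : (0:ℝ) < n.choose m := by exact_mod_cast Nat.choose_pos hmn
  unfold kExp; split <;> positivity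

lemma cAlpha_pos {n : ℕ} (hn : 2 ≤ n) : 0 < cAlpha n :=
  Finset.sum_pos' (fun m _ => kExp_nonneg n m)
    ⟨1, Finset.mem_Icc.2 ⟨le_rfl, by omega⟩, kExp_pos (by omega)⟩

lemma wConc_rpow_kExp_pos {n m : ℕ} (hm : m ∈ Finset.Icc 1 (n / 2)) :
    0 < wConc n m ^ kExp n m := by
  rw [Finset.mem_Icc] at hm
  exact Real.rpow_pos_of_pos (wConc_pos hm.1 (by omega)) _

lemma wProd_pos (n : ℕ) : 0 < wProd n :=
  Finset.prod_pos fun _ hm => wConc_rpow_kExp_pos hm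

lemma wProd_lt_ghzProd {n : ℕ} (hn : 3 ≤ n) : wProd n < ghzProd n := by
  refine Finset.prod_lt_prod (fun _ hm => wConc_rpow_kExp_pos hm)
    (fun m _ => Real.rpow_le_rpow (Real.sqrt_nonneg _) (wConc_le_ghzConc n m) (kExp_nonneg n m))
    ⟨1, Finset.mem_Icc.2 ⟨le_rfl, by omega⟩, ?_⟩
  exact Real.rpow_lt_rpow (wConc_pos le_rfl (by omega)).le
    (wConc_lt_ghzConc le_rfl (by omega)) (kExp_pos (by omega))

/-- For `n ≥ 3` qubits, the GBC of the W state is strictly smaller than the GBC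
of the GHZ state. -/
theorem wGBC_lt_ghzGBC (n : ℕ) (hn : 3 ≤ n) : wGBC n < ghzGBC n :=
  Real.rpow_lt_rpow (wProd_pos n).le (wProd_lt_ghzProd hn)
    (one_div_pos.2 (cAlpha_pos (by omega)))
end
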